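/- arXiv:2503.01023 — 2 statements merged into one kernel-verified Lean document; each statement's English description precedes it below -/
import Mathlib

section
/- For every odd integer n ≥ 1, the rotation action of ℤ/nℤ on the set of n-noncrossing trees is free, i.e., no n-noncrossing tree is invariant under a nontrivial rotation, so every orbit has exactly n elements; in particular n divides A(n). -/
/-!
A rotation fixing a tree `T` on `ZMod n` permutes its `n - 1` edges, and for odd `n` only the
zero rotation fixes an edge `{x, y}`: otherwise it swaps `x` and `y`, so `2 j = 0`. Hence the
stabilizer of `T` acts freely on the edges and its order divides `n - 1`; by Lagrange it also
divides `n`, so it is trivial. Rotations preserve noncrossing trees, so `ZMod n` acts freely on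
them: every orbit has `n` elements and `n ∣ A n`.
-/

/-- The noncrossing condition for a graph on the vertex set `ZMod n`
(vertex `j ∈ {1,…,n}` of the paper corresponds to `j - 1 : ZMod n`):
no two edges `{a,b}` and `{c,d}` satisfy `a < c < b < d`. -/
def Noncrossing {n : ℕ} (G : SimpleGraph (ZMod n)) : Prop :=
  ∀ a b c d : ZMod n, G.Adj a b → G.Adj c d →
    ¬(a.val < c.val ∧ c.val < b.val ∧ b.val < d.val)

/-- An `n`-noncrossing tree: a tree on `n` vertices, drawn on the circle, with no crossing edges. -/
def IsNCTree {n : ℕ} (G : SimpleGraph (ZMod n)) : Prop :=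
  G.IsTree ∧ Noncrossing G

/-- `A n` is the number of `n`-noncrossing trees. -/
noncomputable def A (n : ℕ) : ℕ :=
  Nat.card {G : SimpleGraph (ZMod n) // IsNCTree G}

/-- `A₁ n` is the number of `n`-noncrossing trees where vertex `1`
(i.e. `0 : ZMod n`) has degree `1`. -/
noncomputable def A₁ (n : ℕ) : ℕ :=
  Nat.card {G : SimpleGraph (ZMod n) // IsNCTree G ∧ (G.neighborSet 0).ncard = 1}

/-- Rotation by `j`: the image of a graph on `ZMod n` under the vertex map `v ↦ v + j`. -/
def rotate {n : ℕ} (j : ZMod n) (G : SimpleGraph (ZMod n)) : SimpleGraph (ZMod n) :=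
  G.map (Equiv.addRight j).toEmbedding

lemma rotate_adj {n : ℕ} (j : ZMod n) (G : SimpleGraph (ZMod n)) (x y : ZMod n) :
    (rotate j G).Adj x y ↔ G.Adj (x - j) (y - j) := by
  simp only [rotate, Equiv.coe_toEmbedding, Equiv.coe_addRight]
  constructor
  · rintro ⟨-, a, b, h, rfl, rfl⟩; simpa using h
  · intro h; exact ⟨fun hxy => h.ne (by rw [hxy]), x - j, y - j, h, by ring, by ring⟩

lemma rotate_zero {n : ℕ} (G : SimpleGraph (ZMod n)) : rotate 0 G = G := by
  ext x y; rw [rotate_adj]; simp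

lemma rotate_rotate {n : ℕ} (a b : ZMod n) (G : SimpleGraph (ZMod n)) :
    rotate a (rotate b G) = rotate (a + b) G := by
  simp only [rotate, SimpleGraph.map_map]
  congr 1
  ext x
  simp [add_left_comm, add_comm]

instance rotateAddAction {n : ℕ} : AddAction (ZMod n) (SimpleGraph (ZMod n)) where
  vadd := rotate
  zero_vadd := rotate_zero
  add_vadd a b G := (rotate_rotate a b G).symm

lemma isTree_rotate {n : ℕ} {G : SimpleGraph (ZMod n)} (hG : G.IsTree) (j : ZMod n) :
    (rotate j G).IsTree :=
  (SimpleGraph.Iso.map (Equiv.addRight j) G).isTree_iff.mp hG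

lemma noncrossing_rotate_one {n : ℕ} [NeZero n] {G : SimpleGraph (ZMod n)}
    (hG : Noncrossing G) : Noncrossing (rotate 1 G) := by
  intro a b c d hab hcd ⟨hac, hcb, hbd⟩
  rw [rotate_adj] at hab hcd
  have hdn := d.val_lt
  have : Fact (1 < n) := ⟨by have := NeZero.ne n; omega⟩
  have val_sub_one {x : ZMod n} (hx : 0 < x.val) : (x - 1).val = x.val - 1 := by
    rw [ZMod.val_sub (by rw [ZMod.val_one]; omega), ZMod.val_one]
  have hb := val_sub_one (x := b) (by omega)
  have hc := val_sub_one (x := c) (by omega)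
  have hd := val_sub_one (x := d) (by omega)
  -- Only `a` can wrap around (to `n - 1`); the two edges then cross with their roles exchanged.
  rcases Nat.eq_zero_or_pos a.val with ha | ha
  · have ha' : (a - 1).val = n - 1 := by
      rw [(ZMod.val_eq_zero a).mp ha, zero_sub, ZMod.val_neg_of_ne_zero, ZMod.val_one]
    exact hG _ _ _ _ hcd hab.symm ⟨by omega, by omega, by omega⟩
  · have ha' := val_sub_one ha
    exact hG _ _ _ _ hab hcd ⟨by omega, by omega, by omega⟩

lemma noncrossing_rotate {n : ℕ} [NeZero n] {G : SimpleGraph (ZMod n)} (hG : Noncrossing G)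
    (j : ZMod n) : Noncrossing (rotate j G) := by
  rw [← ZMod.natCast_zmod_val j]
  induction j.val with
  | zero => rwa [Nat.cast_zero, rotate_zero]
  | succ k ih => rw [Nat.cast_succ, add_comm, ← rotate_rotate]; exact noncrossing_rotate_one ih

lemma isNCTree_rotate {n : ℕ} [NeZero n] {G : SimpleGraph (ZMod n)} (hG : IsNCTree G)
    (j : ZMod n) : IsNCTree (rotate j G) :=
  ⟨isTree_rotate hG.1 j, noncrossing_rotate hG.2 j⟩

def ncTrees (n : ℕ) [NeZero n] : SubAddAction (ZMod n) (SimpleGraph (ZMod n)) where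
  carrier := {G | IsNCTree G}
  vadd_mem' j _ hG := isNCTree_rotate hG j

@[to_additive]
lemma MulAction.card_dvd_card_of_stabilizer_eq_bot {G X : Type*} [Group G] [MulAction G X]
    (h : ∀ x : X, MulAction.stabilizer G x = ⊥) : Nat.card G ∣ Nat.card X := by
  rw [Nat.card_congr (MulAction.selfEquivOrbitsQuotientProd h), Nat.card_prod]
  exact dvd_mul_left _ _

lemma map_add_mem_edgeSet_of_mem_stabilizer {n : ℕ} {G : SimpleGraph (ZMod n)} {j : ZMod n}
    (hj : j ∈ AddAction.stabilizer (ZMod n) G) {e : Sym2 (ZMod n)} (he : e ∈ G.edgeSet) :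
    e.map (· + j) ∈ G.edgeSet := by
  rw [← AddAction.mem_stabilizer_iff.mp hj]
  exact (SimpleGraph.Iso.map (Equiv.addRight j) G).map_mem_edgeSet_iff.mpr he

instance stabilizerEdgeSetAddAction {n : ℕ} (G : SimpleGraph (ZMod n)) :
    AddAction (AddAction.stabilizer (ZMod n) G) G.edgeSet where
  vadd j e := ⟨e.1.map (· + j), map_add_mem_edgeSet_of_mem_stabilizer j.2 e.2⟩
  zero_vadd e := Subtype.ext <| by
    change e.1.map (· + 0) = e.1
    simp
  add_vadd a b e := Subtype.ext <| by
    change Sym2.map _ e.1 = Sym2.map _ (Sym2.map _ e.1)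
    rw [Sym2.map_map]
    congr 1
    funext x
    simp only [Function.comp_apply, AddSubgroup.coe_add]
    abel

lemma ZMod.eq_zero_of_add_self_eq_zero {n : ℕ} (hodd : Odd n) {k : ZMod n} (h : k + k = 0) :
    k = 0 := by
  have h2 : IsUnit (2 : ZMod n) := by
    rw [← Nat.cast_ofNat, ZMod.isUnit_iff_coprime]
    exact Nat.coprime_two_left.mpr hodd
  rwa [← two_mul, h2.mul_right_eq_zero] at h

lemma eq_zero_of_sym2_map_add_eq {n : ℕ} (hodd : Odd n) {e : Sym2 (ZMod n)} (he : ¬e.IsDiag)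
    {j : ZMod n} (h : e.map (· + j) = e) : j = 0 := by
  induction e with
  | h x y =>
    rw [Sym2.map_mk, Sym2.eq_iff] at h
    rcases h with ⟨hx, -⟩ | ⟨hx, hy⟩
    · exact add_eq_left.mp hx
    · exact ZMod.eq_zero_of_add_self_eq_zero hodd (by linear_combination hx + hy)

lemma stabilizer_edgeSet_eq_bot {n : ℕ} (hodd : Odd n) (G : SimpleGraph (ZMod n))
    (e : G.edgeSet) : AddAction.stabilizer (AddAction.stabilizer (ZMod n) G) e = ⊥ := by
  refine (AddSubgroup.eq_bot_iff_forall _).mpr fun j hj => Subtype.ext ?_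
  exact eq_zero_of_sym2_map_add_eq hodd (G.not_isDiag_of_mem_edgeSet e.2)
    (congrArg Subtype.val (AddAction.mem_stabilizer_iff.mp hj))

theorem stabilizer_eq_bot_of_isTree {n : ℕ} (hodd : Odd n) {G : SimpleGraph (ZMod n)}
    (hG : G.IsTree) : AddAction.stabilizer (ZMod n) G = ⊥ := by
  have : NeZero n := ⟨hodd.pos.ne'⟩
  have hedges : Nat.card G.edgeSet = n - 1 := by
    have := (SimpleGraph.isTree_iff_connected_and_card.mp hG).2
    rw [Nat.card_zmod] at this
    omega
  have hdvd_edges : Nat.card (AddAction.stabilizer (ZMod n) G) ∣ n - 1 := by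
    rw [← hedges]
    exact AddAction.card_dvd_card_of_stabilizer_eq_bot (stabilizer_edgeSet_eq_bot hodd G)
  have hdvd_vertices : Nat.card (AddAction.stabilizer (ZMod n) G) ∣ n := by
    simpa using AddSubgroup.card_addSubgroup_dvd_card (AddAction.stabilizer (ZMod n) G)
  refine AddSubgroup.card_eq_one.mp (Nat.dvd_one.mp ?_)
  simpa [Nat.sub_sub_self hodd.pos] using Nat.dvd_sub hdvd_vertices hdvd_edges

theorem odd_rotation_action_free_general {n : ℕ} (hodd : Odd n) :
    (∀ G : SimpleGraph (ZMod n), IsNCTree G →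
      ∀ j : ZMod n, rotate j G = G → j = 0) ∧
    (∀ G : SimpleGraph (ZMod n), IsNCTree G →
      Nat.card {H : SimpleGraph (ZMod n) // ∃ j : ZMod n, rotate j G = H} = n) ∧
    n ∣ A n := by
  have : NeZero n := ⟨hodd.pos.ne'⟩
  have hstab {G : SimpleGraph (ZMod n)} (hG : IsNCTree G) :
      AddAction.stabilizer (ZMod n) G = ⊥ :=
    stabilizer_eq_bot_of_isTree hodd hG.1
  refine ⟨fun G hG j hj => ?_, fun G hG => ?_, ?_⟩
  · have hj' : j ∈ AddAction.stabilizer (ZMod n) G := hj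
    rwa [hstab hG, AddSubgroup.mem_bot] at hj'
  · change Nat.card (AddAction.orbit (ZMod n) G) = n
    rw [Nat.card_coe_set_eq, ← AddAction.index_stabilizer, hstab hG, AddSubgroup.index_bot,
      Nat.card_zmod]
  · have hdvd := AddAction.card_dvd_card_of_stabilizer_eq_bot (G := ZMod n) (X := ncTrees n)
      fun T => by rw [SubAddAction.stabilizer_of_subAdd]; exact hstab T.2
    rwa [Nat.card_zmod] at hdvd

theorem odd_rotation_action_free {n : ℕ} (hn : 1 ≤ n) (hodd : Odd n) :
    (∀ G : SimpleGraph (ZMod n), IsNCTree G →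
      ∀ j : ZMod n, rotate j G = G → j = 0) ∧
    (∀ G : SimpleGraph (ZMod n), IsNCTree G →
      Nat.card {H : SimpleGraph (ZMod n) // ∃ j : ZMod n, rotate j G = H} = n) ∧
    n ∣ A n :=
  odd_rotation_action_free_general hodd
end

section
/- For all integers n ≥ 2 and 2 ≤ j ≤ n, the number of n-noncrossing trees in which vertex 1 has degree 1 and {1, j} is an edge equals A(j−1)·A(n+1−j). -/
/-!
Every edge of such a tree other than the chord `{1, j}` must avoid crossing it, so, vertex `1`
being a leaf, it joins two vertices of `2, …, j` or two vertices of `j, …, n`. Removing the leaf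
thus cuts the tree at `j` into a noncrossing graph on the `j - 1` vertices `2, …, j` and one on the
`n + 1 - j` vertices `j, …, n`; conversely any two noncrossing graphs there glue back along `j`.
The glued graph is a tree exactly when both pieces are, by counting edges: `N - 1` edges make a
connected graph on `N` vertices a tree, and make an acyclic one a tree too, since an acyclic graph
extends to a spanning tree.
-/

open SimpleGraph

namespace SimpleGraph

variable {V : Type*} [Finite V] [Nonempty V] {G : SimpleGraph V}

lemma IsAcyclic.card_edgeSet_add_one_le (h : G.IsAcyclic) :
    Nat.card G.edgeSet + 1 ≤ Nat.card V := by
  obtain ⟨T, hGT, -, hT⟩ := connected_top.exists_isTree_le_of_le_of_isAcyclic le_top h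
  rw [← (isTree_iff_connected_and_card.mp hT).2, Nat.card_coe_set_eq,
    Nat.card_coe_set_eq]
  exact Nat.add_le_add_right (Set.ncard_le_ncard (edgeSet_mono hGT) (Set.toFinite _)) 1

lemma IsAcyclic.isTree_of_card_le (h : G.IsAcyclic)
    (hcard : Nat.card V ≤ Nat.card G.edgeSet + 1) : G.IsTree := by
  obtain ⟨T, hGT, -, hT⟩ := connected_top.exists_isTree_le_of_le_of_isAcyclic le_top h
  have hTcard := (isTree_iff_connected_and_card.mp hT).2
  rw [Nat.card_coe_set_eq] at hTcard hcard
  have hET : G.edgeSet = T.edgeSet :=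
    Set.eq_of_subset_of_ncard_le (edgeSet_mono hGT) (by omega) (Set.toFinite _)
  rwa [edgeSet_inj.mp hET]

end SimpleGraph

lemma Set.ncard_eq_one_and_mem_iff {α : Type*} {s : Set α} {x : α} :
    s.ncard = 1 ∧ x ∈ s ↔ s = {x} := by
  constructor
  · rintro ⟨h, hx⟩
    obtain ⟨y, rfl⟩ := Set.ncard_eq_one.mp h
    rw [Set.mem_singleton_iff.mp hx]
  · rintro rfl
    simp

namespace ZMod

variable {m : ℕ} [NeZero m]

lemma val_natCast_add_of_le {n k : ℕ} (h : m + k ≤ n) (x : ZMod m) :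
    ((x.val + k : ℕ) : ZMod n).val = x.val + k :=
  val_cast_of_lt (by have := x.val_lt; omega)

def blockEmb (n k : ℕ) (h : m + k ≤ n) : ZMod m ↪ ZMod n where
  toFun x := ((x.val + k : ℕ) : ZMod n)
  inj' x y hxy := by
    have := congrArg val hxy
    rw [val_natCast_add_of_le h, val_natCast_add_of_le h] at this
    exact val_injective m (by omega)

variable {n k : ℕ} {h : m + k ≤ n}

@[simp]
lemma val_blockEmb (x : ZMod m) : (blockEmb n k h x).val = x.val + k :=
  val_natCast_add_of_le h x

lemma exists_blockEmb_eq {v : ZMod n} (hk : k ≤ v.val) (hv : v.val < m + k) :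
    ∃ x, blockEmb n k h x = v := by
  have : NeZero n := ⟨by omega⟩
  refine ⟨((v.val - k : ℕ) : ZMod m), val_injective n ?_⟩
  rw [val_blockEmb, val_cast_of_lt (by omega)]
  omega

end ZMod

section Noncrossing

variable {m n : ℕ} {G : SimpleGraph (ZMod n)}

lemma Noncrossing.comap (hG : Noncrossing G) (f : ZMod m → ZMod n)
    (hf : ∀ x y, x.val < y.val → (f x).val < (f y).val) : Noncrossing (G.comap f) :=
  fun _ _ _ _ hab hcd ⟨h₁, h₂, h₃⟩ => hG _ _ _ _ hab hcd ⟨hf _ _ h₁, hf _ _ h₂, hf _ _ h₃⟩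

lemma Noncrossing.map {G : SimpleGraph (ZMod m)} (hG : Noncrossing G) (f : ZMod m ↪ ZMod n)
    (hf : ∀ x y, (f x).val < (f y).val ↔ x.val < y.val) : Noncrossing (G.map f) := by
  rintro _ _ _ _ ⟨-, x, y, hxy, rfl, rfl⟩ ⟨-, z, w, hzw, rfl, rfl⟩ ⟨h₁, h₂, h₃⟩
  exact hG x y z w hxy hzw ⟨(hf _ _).mp h₁, (hf _ _).mp h₂, (hf _ _).mp h₃⟩

lemma Noncrossing.val_le_or_le_val (hG : Noncrossing G) {w u v : ZMod n} (hw : G.Adj 0 w)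
    (huv : G.Adj u v) (hu : 0 < u.val) : v.val ≤ w.val ∨ w.val ≤ u.val := by
  by_contra! h
  exact hG 0 w u v hw huv ⟨by simpa using hu, h.2, h.1⟩

end Noncrossing

section Glue

def leftBlock (a b : ℕ) [NeZero a] [NeZero b] : ZMod a ↪ ZMod (a + b) :=
  ZMod.blockEmb (a + b) 1 (by have := NeZero.pos b; omega)

def rightBlock (a b : ℕ) [NeZero a] [NeZero b] : ZMod b ↪ ZMod (a + b) :=
  ZMod.blockEmb (a + b) a (by omega)

variable {a b : ℕ} [NeZero b]

lemma val_natCast_self_add : ((a : ℕ) : ZMod (a + b)).val = a :=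
  ZMod.val_cast_of_lt (by have := NeZero.pos b; omega)

variable [NeZero a]

/-- In the paper's numbering (with `a = j - 1`), `G₁` lives on the vertices `2, …, j`, `G₂` on
`j, …, n`, and the chord `{1, j}` is added. -/
def glue (G₁ : SimpleGraph (ZMod a)) (G₂ : SimpleGraph (ZMod b)) : SimpleGraph (ZMod (a + b)) :=
  G₁.map (leftBlock a b) ⊔ G₂.map (rightBlock a b) ⊔ edge 0 (a : ZMod (a + b))

@[simp]
lemma val_leftBlock (x : ZMod a) : (leftBlock a b x).val = x.val + 1 := ZMod.val_blockEmb x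

@[simp]
lemma val_rightBlock (x : ZMod b) : (rightBlock a b x).val = x.val + a := ZMod.val_blockEmb x

lemma exists_leftBlock_eq {v : ZMod (a + b)} (h₁ : 1 ≤ v.val) (h₂ : v.val ≤ a) :
    ∃ x, leftBlock a b x = v :=
  ZMod.exists_blockEmb_eq h₁ (by omega)

lemma exists_rightBlock_eq {v : ZMod (a + b)} (h : a ≤ v.val) : ∃ x, rightBlock a b x = v :=
  ZMod.exists_blockEmb_eq h (by have := v.val_lt; omega)

variable {G₁ : SimpleGraph (ZMod a)} {G₂ : SimpleGraph (ZMod b)}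

lemma glue_adj_cases {u v : ZMod (a + b)} (h : (glue G₁ G₂).Adj u v) :
    ((G₁.map (leftBlock a b)).Adj u v ∧ 1 ≤ u.val ∧ u.val ≤ a ∧ 1 ≤ v.val ∧ v.val ≤ a) ∨
    ((G₂.map (rightBlock a b)).Adj u v ∧ a ≤ u.val ∧ a ≤ v.val) ∨
    (u.val = 0 ∧ v.val = a ∨ u.val = a ∧ v.val = 0) := by
  rcases h with (hL | hR) | hS
  · obtain ⟨x, y, -, rfl, rfl⟩ := (map_adj _ _ _ _).mp hL
    have := x.val_lt
    have := y.val_lt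
    simp only [val_leftBlock]
    exact Or.inl ⟨hL, by omega, by omega, by omega, by omega⟩
  · obtain ⟨x, y, -, rfl, rfl⟩ := (map_adj _ _ _ _).mp hR
    simp only [val_rightBlock]
    exact Or.inr (Or.inl ⟨hR, by omega, by omega⟩)
  · obtain ⟨⟨rfl, rfl⟩ | ⟨rfl, rfl⟩, -⟩ := (edge_adj _ _ _ _).mp hS <;>
      simp only [ZMod.val_zero, val_natCast_self_add] <;> tauto

lemma glue_adj_zero : (glue G₁ G₂).Adj 0 (a : ZMod (a + b)) := by
  refine Or.inr ((edge_adj _ _ _ _).mpr ⟨Or.inl ⟨rfl, rfl⟩, fun h => ?_⟩)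
  have := congrArg ZMod.val h
  rw [ZMod.val_zero, val_natCast_self_add] at this
  exact NeZero.ne a this.symm

lemma neighborSet_glue_zero : (glue G₁ G₂).neighborSet 0 = {(a : ZMod (a + b))} := by
  ext w
  refine ⟨fun h => ?_, fun h => (Set.mem_singleton_iff.mp h) ▸ glue_adj_zero⟩
  have := NeZero.pos a
  rcases glue_adj_cases h with ⟨-, h0, -⟩ | ⟨-, h0, -⟩ | hS
  · simp at h0
  · simp at h0; omega
  · exact ZMod.val_injective _ (by rw [val_natCast_self_add]; simp at hS; omega)

@[simp]
lemma comap_leftBlock_glue (G₁ : SimpleGraph (ZMod a)) (G₂ : SimpleGraph (ZMod b)) :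
    (glue G₁ G₂).comap (leftBlock a b) = G₁ := by
  ext x y
  refine ⟨fun h => ?_, fun h => Or.inl (Or.inl (map_adj_apply.mpr h))⟩
  rcases glue_adj_cases h with ⟨hL, -⟩ | ⟨-, hx, hy⟩ | hS
  · exact map_adj_apply.mp hL
  · have := x.val_lt
    have := y.val_lt
    simp only [val_leftBlock] at hx hy
    exact absurd (ZMod.val_injective a (by omega)) h.ne
  · simp at hS

@[simp]
lemma comap_rightBlock_glue (G₁ : SimpleGraph (ZMod a)) (G₂ : SimpleGraph (ZMod b)) :
    (glue G₁ G₂).comap (rightBlock a b) = G₂ := by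
  ext x y
  refine ⟨fun h => ?_, fun h => Or.inl (Or.inr (map_adj_apply.mpr h))⟩
  have := NeZero.pos a
  rcases glue_adj_cases h with ⟨-, -, hx, -, hy⟩ | ⟨hR, -⟩ | hS
  · simp only [val_rightBlock] at hx hy
    exact absurd (ZMod.val_injective b (by omega)) h.ne
  · exact map_adj_apply.mp hR
  · simp at hS
    omega

lemma glue_connected (h₁ : G₁.Connected) (h₂ : G₂.Connected) : (glue G₁ G₂).Connected := by
  have ha : ((a : ℕ) : ZMod (a + b)).val = a := val_natCast_self_add
  have := NeZero.pos a
  obtain ⟨x₀, hx₀⟩ := exists_leftBlock_eq (b := b) (by omega) ha.le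
  obtain ⟨y₀, hy₀⟩ := exists_rightBlock_eq (b := b) ha.ge
  have hinge_reachable (v : ZMod (a + b)) : (glue G₁ G₂).Reachable v a := by
    rcases Nat.eq_zero_or_pos v.val with hv | hv
    · rw [(ZMod.val_eq_zero v).mp hv]
      exact glue_adj_zero.reachable
    rcases le_or_gt v.val a with hva | hva
    · obtain ⟨x, rfl⟩ := exists_leftBlock_eq hv hva
      rw [← hx₀]
      exact ((h₁.preconnected x x₀).map (Embedding.map _ G₁).toHom).mono
        (le_sup_left.trans le_sup_left)
    · obtain ⟨y, rfl⟩ := exists_rightBlock_eq hva.le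
      rw [← hy₀]
      exact ((h₂.preconnected y y₀).map (Embedding.map _ G₂).toHom).mono
        (le_sup_right.trans le_sup_left)
  exact ⟨fun u v => (hinge_reachable u).trans (hinge_reachable v).symm⟩

lemma card_edgeSet_glue_le :
    Nat.card (glue G₁ G₂).edgeSet ≤ Nat.card G₁.edgeSet + Nat.card G₂.edgeSet + 1 := by
  simp only [glue, edgeSet_sup, Nat.card_coe_set_eq]
  grw [Set.ncard_union_le, Set.ncard_union_le, edgeSet_map, edgeSet_map, Set.ncard_image_le,
    Set.ncard_image_le, Set.ncard_le_ncard edgeSet_edge_subset, Set.ncard_singleton]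

lemma isTree_glue_iff : (glue G₁ G₂).IsTree ↔ G₁.IsTree ∧ G₂.IsTree := by
  have hE := card_edgeSet_glue_le (G₁ := G₁) (G₂ := G₂)
  constructor
  · intro h
    have hcard := (isTree_iff_connected_and_card.mp h).2
    rw [Nat.card_zmod] at hcard
    have hA₁ : G₁.IsAcyclic := by simpa using h.isAcyclic.of_comap (leftBlock a b)
    have hA₂ : G₂.IsAcyclic := by simpa using h.isAcyclic.of_comap (rightBlock a b)
    have h₁ := hA₁.card_edgeSet_add_one_le
    have h₂ := hA₂.card_edgeSet_add_one_le
    rw [Nat.card_zmod] at h₁ h₂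
    exact ⟨hA₁.isTree_of_card_le (by rw [Nat.card_zmod]; omega),
      hA₂.isTree_of_card_le (by rw [Nat.card_zmod]; omega)⟩
  · rintro ⟨h₁, h₂⟩
    have hc₁ := (isTree_iff_connected_and_card.mp h₁).2
    have hc₂ := (isTree_iff_connected_and_card.mp h₂).2
    have hconn := glue_connected h₁.connected h₂.connected
    have := hconn.card_vert_le_card_edgeSet_add_one
    rw [Nat.card_zmod] at hc₁ hc₂ this
    exact isTree_iff_connected_and_card.mpr ⟨hconn, by rw [Nat.card_zmod]; omega⟩

lemma noncrossing_glue_iff : Noncrossing (glue G₁ G₂) ↔ Noncrossing G₁ ∧ Noncrossing G₂ := by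
  constructor
  · intro h
    exact ⟨by simpa using h.comap (leftBlock a b) fun x y hxy => by simpa using hxy,
      by simpa using h.comap (rightBlock a b) fun x y hxy => by simpa using hxy⟩
  · rintro ⟨h₁, h₂⟩
    have hL := h₁.map (leftBlock a b) fun x y => by simp
    have hR := h₂.map (rightBlock a b) fun x y => by simp
    intro u w c d huw hcd hcross
    rcases glue_adj_cases huw with ⟨huw, _⟩ | ⟨huw, _⟩ | _ <;>
      rcases glue_adj_cases hcd with ⟨hcd, _⟩ | ⟨hcd, _⟩ | _ <;>
      first | exact hL _ _ _ _ huw hcd hcross | exact hR _ _ _ _ huw hcd hcross | omega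

lemma isNCTree_glue_iff : IsNCTree (glue G₁ G₂) ↔ IsNCTree G₁ ∧ IsNCTree G₂ := by
  simp only [IsNCTree, isTree_glue_iff, noncrossing_glue_iff]
  tauto

lemma glue_comap_eq {G : SimpleGraph (ZMod (a + b))} (hG : Noncrossing G)
    (h0 : G.neighborSet 0 = {(a : ZMod (a + b))}) :
    glue (G.comap (leftBlock a b)) (G.comap (rightBlock a b)) = G := by
  have hadj : G.Adj 0 a := by rw [← mem_neighborSet, h0]; rfl
  refine le_antisymm
    (sup_le (sup_le (map_comap_le _ _) (map_comap_le _ _)) ((edge_le_iff G).mpr (.inr hadj))) ?_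
  suffices key : ∀ u v, G.Adj u v → u.val < v.val → (glue (G.comap (leftBlock a b))
      (G.comap (rightBlock a b))).Adj u v by
    intro u v huv
    rcases lt_or_gt_of_ne fun he => huv.ne (ZMod.val_injective _ he) with hlt | hgt
    · exact key u v huv hlt
    · exact (key v u huv.symm hgt).symm
  intro u v huv hlt
  rcases Nat.eq_zero_or_pos u.val with hu | hu
  · rw [(ZMod.val_eq_zero u).mp hu] at huv ⊢
    have hv : v = a := by rw [← Set.mem_singleton_iff, ← h0]; exact huv
    exact hv ▸ glue_adj_zero
  have ha : ((a : ℕ) : ZMod (a + b)).val = a := val_natCast_self_add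
  rcases hG.val_le_or_le_val hadj huv hu with hv | hu'
  · obtain ⟨x, rfl⟩ := exists_leftBlock_eq (v := u) hu (by omega)
    obtain ⟨y, rfl⟩ := exists_leftBlock_eq (v := v) (by omega) (by omega)
    exact Or.inl (Or.inl (map_adj_apply.mpr huv))
  · obtain ⟨x, rfl⟩ := exists_rightBlock_eq (v := u) (by omega)
    obtain ⟨y, rfl⟩ := exists_rightBlock_eq (v := v) (by omega)
    exact Or.inl (Or.inr (map_adj_apply.mpr huv))

variable (a b) in
def glueEquiv :
    {G₁ : SimpleGraph (ZMod a) // IsNCTree G₁} × {G₂ : SimpleGraph (ZMod b) // IsNCTree G₂} ≃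
      {G : SimpleGraph (ZMod (a + b)) // IsNCTree G ∧ G.neighborSet 0 = {(a : ZMod (a + b))}} where
  toFun p := ⟨glue p.1 p.2, isNCTree_glue_iff.mpr ⟨p.1.2, p.2.2⟩, neighborSet_glue_zero⟩
  invFun G :=
    have hG : IsNCTree (G.1.comap (leftBlock a b)) ∧ IsNCTree (G.1.comap (rightBlock a b)) := by
      rw [← isNCTree_glue_iff, glue_comap_eq G.2.1.2 G.2.2]
      exact G.2.1
    (⟨_, hG.1⟩, ⟨_, hG.2⟩)
  left_inv p := by ext <;> simp
  right_inv G := Subtype.ext (glue_comap_eq G.2.1.2 G.2.2)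

variable (a b) in
lemma card_ncTrees_neighborSet_zero_eq_singleton :
    Nat.card {G : SimpleGraph (ZMod (a + b)) //
      IsNCTree G ∧ G.neighborSet 0 = {(a : ZMod (a + b))}} = A a * A b := by
  rw [A, A, ← Nat.card_prod]
  exact (Nat.card_congr (glueEquiv a b)).symm

end Glue

theorem card_ncTrees_deg_one_with_edge_general (n j : ℕ) (hj2 : 2 ≤ j) (hjn : j ≤ n) :
    Nat.card {G : SimpleGraph (ZMod n) //
        IsNCTree G ∧ (G.neighborSet 0).ncard = 1 ∧ G.Adj 0 ((j - 1 : ℕ) : ZMod n)} =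
      A (j - 1) * A (n + 1 - j) := by
  obtain ⟨b, rfl⟩ : ∃ b, n = (j - 1) + b := ⟨n + 1 - j, by omega⟩
  have : NeZero (j - 1) := ⟨by omega⟩
  have : NeZero b := ⟨by omega⟩
  rw [show j - 1 + b + 1 - j = b by omega, ← card_ncTrees_neighborSet_zero_eq_singleton]
  exact Nat.card_congr (Equiv.subtypeEquivRight fun G =>
    and_congr_right fun _ => Set.ncard_eq_one_and_mem_iff)

theorem card_ncTrees_deg_one_with_edge (n j : ℕ) (hn : 2 ≤ n) (hj2 : 2 ≤ j) (hjn : j ≤ n) :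
    Nat.card {G : SimpleGraph (ZMod n) //
        IsNCTree G ∧ (G.neighborSet 0).ncard = 1 ∧ G.Adj 0 ((j - 1 : ℕ) : ZMod n)} =
      A (j - 1) * A (n + 1 - j) :=
  card_ncTrees_deg_one_with_edge_general n j hj2 hjn
end
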